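/- Let N ≥ 1. In B_sp with the type-B_N Kashiwara operators, the constant sequence (+,…,+) is the unique element b with f̃_l b = 0 for all 1 ≤ l ≤ N, and every sign sequence of length N is of the form ẽ_{l_1} ẽ_{l_2} ⋯ ẽ_{l_p}(+,…,+) for some p ≥ 0 and l_1,…,l_p ∈ {1,…,N}. -/
import Mathlib


namespace CrystalPaper

/-- A sign sequence of length `N`: `true` codes `+`, `false` codes `−`. -/
abbrev Seq (N : ℕ) := Fin N → Bool

/-- The constant sequence `(+,…,+)`. -/
def top (N : ℕ) : Seq N := fun _ => true

/-- The constant sequence `(−,…,−)`. -/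
def bot (N : ℕ) : Seq N := fun _ => false

/-- The sequence `(+^k, −^{N−k})` (first `k` entries `+`, the rest `−`). -/
def lowSeq (N k : ℕ) : Seq N := fun i => decide ((i : ℕ) < k)

/-- The number of `−` entries of a sign sequence. -/
def minusCount (N : ℕ) (b : Seq N) : ℕ :=
  (Finset.univ.filter (fun i => b i = false)).card

/-- `B_sp^+`: sign sequences with an even number of `−` entries. -/
def BspPlus (N : ℕ) (b : Seq N) : Prop := Even (minusCount N b)

/-- `B_sp^−`: sign sequences with an odd number of `−` entries. -/
def BspMinus (N : ℕ) (b : Seq N) : Prop := Odd (minusCount N b)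

/-- The type-`B_N` Kashiwara raising operator `ẽ_l`, labels `1 ≤ l ≤ N`.
For `1 ≤ l ≤ N−1` it replaces `(b_l, b_{l+1}) = (+,−)` by `(−,+)`;
`ẽ_N` replaces `b_N = +` by `−`. -/
def eB (N l : ℕ) (b : Seq N) : Option (Seq N) :=
  if h : 1 ≤ l ∧ l + 1 ≤ N then
    let i : Fin N := ⟨l - 1, by omega⟩
    let j : Fin N := ⟨l, by omega⟩
    if b i = true ∧ b j = false then
      some (Function.update (Function.update b i false) j true)
    else none
  else if h2 : l = N ∧ 1 ≤ N then
    let i : Fin N := ⟨N - 1, by omega⟩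
    if b i = true then some (Function.update b i false) else none
  else none

/-- The type-`B_N` Kashiwara lowering operator `f̃_l`, labels `1 ≤ l ≤ N`.
For `1 ≤ l ≤ N−1` it replaces `(b_l, b_{l+1}) = (−,+)` by `(+,−)`;
`f̃_N` replaces `b_N = −` by `+`. -/
def fB (N l : ℕ) (b : Seq N) : Option (Seq N) :=
  if h : 1 ≤ l ∧ l + 1 ≤ N then
    let i : Fin N := ⟨l - 1, by omega⟩
    let j : Fin N := ⟨l, by omega⟩
    if b i = false ∧ b j = true then
      some (Function.update (Function.update b i true) j false)
    else none
  else if h2 : l = N ∧ 1 ≤ N then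
    let i : Fin N := ⟨N - 1, by omega⟩
    if b i = false then some (Function.update b i true) else none
  else none

/-- Weight measure: sum of `N - i` over minus positions. Decreases under `f̃`. -/
def mwt (N : ℕ) (b : Seq N) : ℕ :=
  ∑ k : Fin N, if b k = false then N - (k : ℕ) else 0

lemma exists_fB (N : ℕ) (hN : 1 ≤ N) (b : Seq N) (hb : b ≠ top N) :
    ∃ l b', 1 ≤ l ∧ l ≤ N ∧ fB N l b = some b' := by
  classical
  have hS : (Finset.univ.filter (fun k : Fin N => b k = false)).Nonempty := by
    by_contra h
    apply hb
    funext k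
    rw [Finset.not_nonempty_iff_eq_empty] at h
    have := Finset.eq_empty_iff_forall_notMem.mp h k
    simp at this
    simpa [top] using this
  set S := Finset.univ.filter (fun k : Fin N => b k = false) with hSdef
  obtain ⟨k, hk, hmax⟩ := S.exists_max_image (fun x => (x : ℕ)) hS
  have hkfalse : b k = false := by simpa [hSdef] using hk
  by_cases hktop : (k : ℕ) = N - 1
  · refine ⟨N, Function.update b ⟨N - 1, by omega⟩ true, hN, le_refl N, ?_⟩
    have hk' : (⟨N - 1, by omega⟩ : Fin N) = k := by
      apply Fin.ext; simp [hktop]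
    rw [fB, dif_neg (by omega), dif_pos ⟨rfl, hN⟩]
    simp [hk', hkfalse]
  · have hklt : (k : ℕ) < N - 1 := by
      have := k.isLt; omega
    set l : ℕ := (k : ℕ) + 1 with hl
    have h1 : 1 ≤ l := by omega
    have h2 : l + 1 ≤ N := by omega
    have hi : (⟨l - 1, by omega⟩ : Fin N) = k := by apply Fin.ext; simp [hl]
    have hj : b ⟨l, by omega⟩ = true := by
      by_contra hjf
      have hjf' : b ⟨l, by omega⟩ = false := by
        cases h : b (⟨l, by omega⟩ : Fin N) <;> simp_all
      have := hmax ⟨l, by omega⟩ (by simp [hSdef, hjf'])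
      simp [hl] at this
    refine ⟨l, Function.update (Function.update b ⟨l - 1, by omega⟩ true) ⟨l, by omega⟩ false,
      h1, by omega, ?_⟩
    rw [fB, dif_pos ⟨h1, h2⟩]
    dsimp only
    rw [if_pos ⟨show b ⟨l - 1, by omega⟩ = false by rw [hi]; exact hkfalse, hj⟩]

lemma fB_top (N : ℕ) (l : ℕ) : fB N l (top N) = none := by
  rw [fB]
  split
  · simp [top]
  · split
    · simp [top]
    · rfl

lemma eB_of_fB (N l : ℕ) (b b' : Seq N) (h : fB N l b = some b') :
    eB N l b' = some b := by
  classical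
  rw [fB] at h
  split at h
  · rename_i hcond
    obtain ⟨h1, h2⟩ := hcond
    dsimp only at h
    set i : Fin N := ⟨l - 1, by omega⟩ with hidef
    set j : Fin N := ⟨l, by omega⟩ with hjdef
    have hij : i ≠ j := by
      simp [hidef, hjdef, Fin.ext_iff]; omega
    split at h
    · rename_i hb
      obtain ⟨hbi, hbj⟩ := hb
      have hb' : b' = Function.update (Function.update b i true) j false := by
        injection h with h; exact h.symm
      have hb'i : b' i = true := by
        simp [hb', Function.update_of_ne hij]
      have hb'j : b' j = false := by simp [hb']
      rw [eB, dif_pos ⟨h1, h2⟩]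
      simp only [← hidef, ← hjdef, hb'i, hb'j, and_self, if_pos]
      congr 1
      funext x
      by_cases hx : x = j
      · subst hx; simp [Function.update, hbj]
      · by_cases hx2 : x = i
        · subst hx2
          simp [hb', Function.update_of_ne hij, Function.update_of_ne hx, hbi]
        · simp [hb', Function.update_of_ne hx, Function.update_of_ne hx2]
    · exact absurd h (by simp)
  · split at h
    · rename_i hne hcond
      obtain ⟨h1, h2⟩ := hcond
      dsimp only at h
      set i : Fin N := ⟨N - 1, by omega⟩ with hidef
      split at h
      · rename_i hbi
        have hb' : b' = Function.update b i true := by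
          injection h with h; exact h.symm
        have hb'i : b' i = true := by simp [hb']
        rw [eB, dif_neg hne, dif_pos ⟨h1, h2⟩]
        simp only [← hidef, hb'i, if_pos]
        congr 1
        funext x
        by_cases hx : x = i
        · subst hx; simp [Function.update, hbi]
        · simp [hb', Function.update_of_ne hx]
      · exact absurd h (by simp)
    · exact absurd h (by simp)

lemma mwt_lt_of_fB (N l : ℕ) (b b' : Seq N) (h : fB N l b = some b') :
    mwt N b' < mwt N b := by
  classical
  rw [fB] at h
  split at h
  · rename_i hcond
    obtain ⟨h1, h2⟩ := hcond
    dsimp only at h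
    set i : Fin N := ⟨l - 1, by omega⟩ with hidef
    set j : Fin N := ⟨l, by omega⟩ with hjdef
    have hij : i ≠ j := by simp [hidef, hjdef, Fin.ext_iff]; omega
    split at h
    · rename_i hb
      obtain ⟨hbi, hbj⟩ := hb
      have hb' : b' = Function.update (Function.update b i true) j false := by
        injection h with h; exact h.symm
      have hrest : ∀ x : Fin N, x ≠ i → x ≠ j →
          (if b' x = false then N - (x : ℕ) else 0)
            = (if b x = false then N - (x : ℕ) else 0) := by
        intro x hxi hxj
        simp [hb', Function.update_of_ne hxj, Function.update_of_ne hxi]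
      have hb'i : b' i = true := by simp [hb', Function.update_of_ne hij]
      have hb'j : b' j = false := by simp [hb']
      have key : ∀ c : Seq N, mwt N c =
          (if c i = false then N - (i : ℕ) else 0)
          + ((if c j = false then N - (j : ℕ) else 0)
          + ∑ x ∈ (Finset.univ.erase i).erase j,
              (if c x = false then N - (x : ℕ) else 0)) := by
        intro c
        rw [mwt, ← Finset.add_sum_erase _ _ (Finset.mem_univ i),
          ← Finset.add_sum_erase _ _ (Finset.mem_erase.mpr ⟨Ne.symm hij, Finset.mem_univ j⟩)]
      rw [key b, key b']
      have hsum : ∑ x ∈ (Finset.univ.erase i).erase j,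
          (if b' x = false then N - (x : ℕ) else 0)
          = ∑ x ∈ (Finset.univ.erase i).erase j,
          (if b x = false then N - (x : ℕ) else 0) := by
        apply Finset.sum_congr rfl
        intro x hx
        rw [Finset.mem_erase, Finset.mem_erase] at hx
        exact hrest x hx.2.1 hx.1
      rw [hsum, hb'i, hb'j, hbi, hbj]
      have hi1 : (i : ℕ) = l - 1 := rfl
      have hj1 : (j : ℕ) = l := rfl
      rw [hi1, hj1]
      norm_num
      omega
    · exact absurd h (by simp)
  · split at h
    · rename_i hne hcond
      obtain ⟨h1, h2⟩ := hcond
      dsimp only at h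
      set i : Fin N := ⟨N - 1, by omega⟩ with hidef
      split at h
      · rename_i hbi
        have hb' : b' = Function.update b i true := by
          injection h with h; exact h.symm
        have hb'i : b' i = true := by simp [hb']
        have key : ∀ c : Seq N, mwt N c =
            (if c i = false then N - (i : ℕ) else 0)
            + ∑ x ∈ Finset.univ.erase i,
                (if c x = false then N - (x : ℕ) else 0) := by
          intro c
          rw [mwt, ← Finset.add_sum_erase _ _ (Finset.mem_univ i)]
        rw [key b, key b']
        have hsum : ∑ x ∈ Finset.univ.erase i,
            (if b' x = false then N - (x : ℕ) else 0)
            = ∑ x ∈ Finset.univ.erase i,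
            (if b x = false then N - (x : ℕ) else 0) := by
          apply Finset.sum_congr rfl
          intro x hx
          rw [Finset.mem_erase] at hx
          simp [hb', Function.update_of_ne hx.1]
        rw [hsum, hb'i, hbi]
        have hi1 : (i : ℕ) = N - 1 := rfl
        rw [hi1]
        norm_num
        omega
      · exact absurd h (by simp)
    · exact absurd h (by simp)

lemma reach_aux (N : ℕ) (hN : 1 ≤ N) : ∀ n (b : Seq N), mwt N b ≤ n →
    Relation.ReflTransGen
      (fun x y => ∃ l, 1 ≤ l ∧ l ≤ N ∧ eB N l x = some y) (top N) b := by
  intro n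
  induction n with
  | zero =>
    intro b hb
    by_cases htop : b = top N
    · rw [htop]
    · obtain ⟨l, b', _, _, hf⟩ := exists_fB N hN b htop
      have := mwt_lt_of_fB N l b b' hf
      omega
  | succ n ih =>
    intro b hb
    by_cases htop : b = top N
    · rw [htop]
    · obtain ⟨l, b', hl1, hl2, hf⟩ := exists_fB N hN b htop
      have hlt := mwt_lt_of_fB N l b b' hf
      exact Relation.ReflTransGen.tail (ih b' (by omega))
        ⟨l, hl1, hl2, eB_of_fB N l b b' hf⟩

/-- In `B_sp` (all sign sequences of length `N ≥ 1`) with the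
type-`B_N` Kashiwara operators, `(+,…,+)` is the unique element killed by all `f̃_l`,
`1 ≤ l ≤ N`, and every sign sequence is obtained from `(+,…,+)` by applying
operators `ẽ_l`, `1 ≤ l ≤ N`. -/
theorem Bsp_B_lowest_unique_and_connected (N : ℕ) (hN : 1 ≤ N) :
    (∀ b : Seq N, (∀ l, 1 ≤ l → l ≤ N → fB N l b = none) ↔ b = top N) ∧
    (∀ b : Seq N,
      Relation.ReflTransGen
        (fun x y => ∃ l, 1 ≤ l ∧ l ≤ N ∧ eB N l x = some y) (top N) b) := by
  constructor
  · intro b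
    constructor
    · intro h
      by_contra htop
      obtain ⟨l, b', hl1, hl2, hf⟩ := exists_fB N hN b htop
      rw [h l hl1 hl2] at hf
      exact absurd hf (by simp)
    · intro h l _ _
      rw [h]
      exact fB_top N l
  · intro b
    exact reach_aux N hN (mwt N b) b le_rfl

end CrystalPaper
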